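/- There exists a constant A₂ > 0 such that for all integers m ≥ 2 and all integers ℓ with 1 ≤ ℓ ≤ m − 1, the binomial coefficient times the Beta value satisfies C(m, ℓ)·B(βℓ + 1, β(m−ℓ) + 1) ≤ (A₂/m)·(ℓ^ℓ·(m−ℓ)^{m−ℓ}/m^m)^{β−1}. -/

import Mathlib

open MeasureTheory Real Set

/-- The exponent `β = (√17 - 3)/2`, the positive root of `(β+1)(β+2) = 4`. -/
noncomputable def β : ℝ := (Real.sqrt 17 - 3) / 2

/-- The Beta function `B(a,b) = ∫₀¹ t^{a-1}(1-t)^{b-1} dt`. -/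
noncomputable def Bfun (a b : ℝ) : ℝ := ∫ t in (0:ℝ)..1, t ^ (a - 1) * (1 - t) ^ (b - 1)

/-!
With `S x = stirlingApprox x = x ^ (x + 1/2) * e^(-x)` (so that `Γ(x+1) ∼ √(2π) S x`),
Stirling's bounds for factorials, transported to real arguments by the log-convexity of `Γ`, give
`Γ(x+1) ≍ S x` with constants depending only on a lower bound for `x`. Both
`C(m, ℓ) = Γ(m+1) / (Γ(ℓ+1) Γ(k+1))` and `B(βℓ+1, βk+1) = Γ(βℓ+1) Γ(βk+1) / ((βm+1) Γ(βm+1))`,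
where `k = m - ℓ`, are thus controlled by `S(cℓ) S(ck) / S(cm) = √(cℓk/m) (ℓ^ℓ k^k / m^m)^c` for
`c = 1` and `c = β`. In the product the square roots cancel up to `√β`, leaving
`√β / (βm + 1) · (ℓ^ℓ k^k / m^m)^(β-1)`.
-/

open scoped Nat

noncomputable def stirlingApprox (x : ℝ) : ℝ := x ^ (x + 1 / 2) * exp (-x)

lemma stirlingApprox_pos {x : ℝ} (hx : 0 < x) : 0 < stirlingApprox x := by
  unfold stirlingApprox; positivity

lemma stirlingApprox_natCast (n : ℕ) : stirlingApprox n = √n * (n / exp 1) ^ n := by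
  rw [stirlingApprox, rpow_add' n.cast_nonneg (by positivity), rpow_natCast, sqrt_eq_rpow,
    div_pow, exp_one_pow, exp_neg]
  ring

lemma stirlingApprox_natCast_le_factorial (n : ℕ) : stirlingApprox n ≤ n ! := by
  refine le_trans ?_ (Stirling.le_factorial_stirling n)
  rw [stirlingApprox_natCast]
  gcongr
  nlinarith [pi_gt_three]

lemma factorial_le_exp_one_mul_stirlingApprox {n : ℕ} (hn : n ≠ 0) :
    (n ! : ℝ) ≤ exp 1 * stirlingApprox n := by
  obtain ⟨k, rfl⟩ := Nat.exists_eq_succ_of_ne_zero hn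
  have h := Stirling.stirlingSeq'_antitone (Nat.zero_le k)
  simp only [Function.comp_apply, Nat.succ_eq_add_one, zero_add, Stirling.stirlingSeq_one] at h
  rw [Stirling.stirlingSeq, div_le_div_iff₀ (by positivity) (by positivity)] at h
  rw [stirlingApprox_natCast]
  calc ((k + 1)! : ℝ) = (k + 1)! * √2 / √2 := by field_simp
    _ ≤ exp 1 * (√(2 * (k + 1 : ℕ)) * (((k + 1 : ℕ) : ℝ) / exp 1) ^ (k + 1)) / √2 := by gcongr
    _ = _ := by rw [sqrt_mul (by norm_num)]; field_simp

lemma add_one_rpow_le_exp_div_mul_rpow {x p : ℝ} (hx : 0 < x) (hp : 0 ≤ p) :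
    (x + 1) ^ p ≤ exp (p / x) * x ^ p := by
  have h : x + 1 ≤ x * exp (1 / x) := by
    have := add_one_le_exp (1 / x)
    calc x + 1 = x * (1 / x + 1) := by field_simp; ring
      _ ≤ x * exp (1 / x) := by gcongr
  calc (x + 1) ^ p ≤ (x * exp (1 / x)) ^ p := by gcongr
    _ = exp (p / x) * x ^ p := by
      rw [mul_rpow hx.le (exp_pos _).le, ← exp_mul]; ring_nf

lemma Gamma_add_le_mul_rpow {y s : ℝ} (hy : 0 < y) (hs₀ : 0 ≤ s) (hs₁ : s ≤ 1) :
    Gamma (y + s) ≤ Gamma y * y ^ s := by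
  have hΓ := Gamma_pos_of_pos hy
  have h := convexOn_log_Gamma.2 (mem_Ioi.2 hy) (mem_Ioi.2 (by linarith : 0 < y + 1))
    (sub_nonneg.2 hs₁) hs₀ (by ring)
  simp only [smul_eq_mul, Function.comp_apply, Gamma_add_one hy.ne',
    log_mul hy.ne' hΓ.ne'] at h
  rw [show (1 - s) * y + s * (y + 1) = y + s by ring] at h
  rw [← log_le_log_iff (Gamma_pos_of_pos (by linarith)) (by positivity),
    log_mul hΓ.ne' (by positivity), log_rpow hy]
  linarith

lemma Gamma_add_one_le_exp_mul_stirlingApprox {x : ℝ} (hx : 0 < x) :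
    Gamma (x + 1) ≤ exp (2 + 1 / (2 * x)) * stirlingApprox x := by
  set n := ⌊x⌋₊
  have hn : (n : ℝ) ≤ x := Nat.floor_le hx.le
  have hn' : x < n + 1 := Nat.lt_floor_add_one x
  have hN : (0 : ℝ) < n + 1 := by positivity
  have hfact : ((n + 1)! : ℝ) ≤ exp 1 * stirlingApprox (n + 1) := by
    exact_mod_cast factorial_le_exp_one_mul_stirlingApprox n.succ_ne_zero
  calc Gamma (x + 1) = Gamma ((n + 1) + (x - n)) := by ring_nf
    _ ≤ Gamma (n + 1) * (n + 1 : ℝ) ^ (x - n) :=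
      Gamma_add_le_mul_rpow hN (sub_nonneg.2 hn) (by linarith)
    _ = (n + 1)! * (n + 1 : ℝ) ^ (x - n - 1) := by
      rw [Gamma_nat_eq_factorial, rpow_sub_one hN.ne', Nat.factorial_succ]
      push_cast
      field_simp
    _ ≤ exp 1 * stirlingApprox (n + 1) * (n + 1 : ℝ) ^ (x - n - 1) := by gcongr
    _ = exp 1 * (n + 1 : ℝ) ^ (x + 1 / 2) * exp (-(n + 1)) := by
      rw [stirlingApprox, mul_assoc, mul_right_comm, ← rpow_add hN]
      ring_nf
    _ ≤ exp 1 * (x + 1) ^ (x + 1 / 2) * exp (-x) := by gcongr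
    _ ≤ exp 1 * (exp ((x + 1 / 2) / x) * x ^ (x + 1 / 2)) * exp (-x) := by
      gcongr
      exact add_one_rpow_le_exp_div_mul_rpow hx (by linarith)
    _ = exp (2 + 1 / (2 * x)) * stirlingApprox x := by
      rw [stirlingApprox, show 2 + 1 / (2 * x) = 1 + (x + 1 / 2) / x by field_simp; ring, exp_add]
      ring

lemma exp_neg_mul_stirlingApprox_le_Gamma_add_one {x : ℝ} (hx : 0 < x) :
    exp (-(1 + 1 / x)) * stirlingApprox x ≤ Gamma (x + 1) := by
  set M : ℕ := ⌊x⌋₊ + 1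
  set s : ℝ := M - x
  have hs₀ : 0 ≤ s := by
    have := Nat.lt_floor_add_one x
    simp only [s, M]; push_cast; linarith
  have hs₁ : s ≤ 1 := by
    have := Nat.floor_le hx.le
    simp only [s, M]; push_cast; linarith
  have hM : (M : ℝ) = x + s := by ring
  have key : stirlingApprox x * (x ^ s * exp (-s)) ≤ Gamma (x + 1) * (exp (s / x) * x ^ s) :=
    calc stirlingApprox x * (x ^ s * exp (-s)) = x ^ ((M : ℝ) + 1 / 2) * exp (-M) := by
          rw [stirlingApprox, hM, show x + s + 1 / 2 = (x + 1 / 2) + s by ring,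
            rpow_add hx (x + 1 / 2) s, neg_add, exp_add]
          ring
      _ ≤ stirlingApprox M := by
          unfold stirlingApprox
          gcongr
          linarith
      _ ≤ Gamma (M + 1) := by
          rw [Gamma_nat_eq_factorial]; exact stirlingApprox_natCast_le_factorial M
      _ = Gamma ((x + 1) + s) := by rw [hM]; ring_nf
      _ ≤ Gamma (x + 1) * (x + 1) ^ s := Gamma_add_le_mul_rpow (by linarith) hs₀ hs₁
      _ ≤ Gamma (x + 1) * (exp (s / x) * x ^ s) := by
          gcongr
          exact add_one_rpow_le_exp_div_mul_rpow hx hs₀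
  have hS := (stirlingApprox_pos hx).le
  calc exp (-(1 + 1 / x)) * stirlingApprox x
        ≤ exp (-(s + s / x)) * stirlingApprox x := by gcongr
    _ = exp (-(s + s / x)) * (stirlingApprox x * (x ^ s * exp (-s))) / (x ^ s * exp (-s)) := by
        field_simp
    _ ≤ exp (-(s + s / x)) * (Gamma (x + 1) * (exp (s / x) * x ^ s)) / (x ^ s * exp (-s)) := by
        gcongr
    _ = Gamma (x + 1) := by
        rw [neg_add, exp_add, exp_neg, exp_neg]; field_simp

lemma Bfun_eq_Gamma_mul_Gamma_div {a b : ℝ} (ha : 0 < a) (hb : 0 < b) :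
    Bfun a b = Gamma a * Gamma b / Gamma (a + b) := by
  have h : (Bfun a b : ℂ) = Complex.betaIntegral a b := by
    rw [Bfun, ← intervalIntegral.integral_ofReal, Complex.betaIntegral]
    refine intervalIntegral.integral_congr fun t ht => ?_
    rw [uIcc_of_le zero_le_one] at ht
    push_cast
    rw [Complex.ofReal_cpow ht.1, Complex.ofReal_cpow (sub_nonneg.2 ht.2)]
    push_cast
    ring
  rw [Complex.betaIntegral_eq_Gamma_mul_div _ _ (by simpa) (by simpa), ← Complex.ofReal_add,
    Complex.Gamma_ofReal, Complex.Gamma_ofReal, Complex.Gamma_ofReal] at h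
  exact_mod_cast h

lemma Bfun_add_one_le_stirlingApprox {u v : ℝ} (hu : 0 < u) (hv : 0 < v) :
    Bfun (u + 1) (v + 1) ≤ exp (5 + 1 / (2 * u) + 1 / (2 * v) + 1 / (u + v)) / (u + v) *
      (stirlingApprox u * stirlingApprox v / stirlingApprox (u + v)) := by
  have hSu := stirlingApprox_pos hu
  have hSv := stirlingApprox_pos hv
  have hSuv := stirlingApprox_pos (add_pos hu hv)
  rw [Bfun_eq_Gamma_mul_Gamma_div (by linarith) (by linarith),
    show u + 1 + (v + 1) = (u + v + 1) + 1 by ring, Gamma_add_one (s := u + v + 1) (by positivity)]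
  calc Gamma (u + 1) * Gamma (v + 1) / ((u + v + 1) * Gamma (u + v + 1))
      ≤ exp (2 + 1 / (2 * u)) * stirlingApprox u * (exp (2 + 1 / (2 * v)) * stirlingApprox v) /
          ((u + v) * (exp (-(1 + 1 / (u + v))) * stirlingApprox (u + v))) := by
        gcongr ?_ * ?_ / (?_ * ?_)
        · exact Gamma_add_one_le_exp_mul_stirlingApprox hu
        · exact Gamma_add_one_le_exp_mul_stirlingApprox hv
        · linarith
        · exact exp_neg_mul_stirlingApprox_le_Gamma_add_one (add_pos hu hv)
    _ = _ := by
        rw [show exp (5 + 1 / (2 * u) + 1 / (2 * v) + 1 / (u + v)) = exp (2 + 1 / (2 * u)) *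
            exp (2 + 1 / (2 * v)) / exp (-(1 + 1 / (u + v))) by rw [← exp_add, ← exp_sub]; ring_nf]
        field_simp

lemma log_stirlingApprox {x : ℝ} (hx : 0 < x) :
    log (stirlingApprox x) = (x + 1 / 2) * log x - x := by
  rw [stirlingApprox, log_mul (by positivity) (by positivity), log_rpow hx, log_exp]
  ring

lemma stirlingApprox_mul_div_stirlingApprox {c x y : ℝ} (hc : 0 < c) (hx : 0 < x) (hy : 0 < y) :
    stirlingApprox (c * x) * stirlingApprox (c * y) / stirlingApprox (c * (x + y)) =
      √(c * x * y / (x + y)) * (x ^ x * y ^ y / (x + y) ^ (x + y)) ^ c := by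
  have hxy : 0 < x + y := add_pos hx hy
  have h₁ := stirlingApprox_pos (mul_pos hc hx)
  have h₂ := stirlingApprox_pos (mul_pos hc hy)
  have h₃ := stirlingApprox_pos (mul_pos hc hxy)
  have hx' := rpow_pos_of_pos hx x
  have hy' := rpow_pos_of_pos hy y
  have hxy' := rpow_pos_of_pos hxy (x + y)
  refine log_injOn_pos (mem_Ioi.2 (by positivity)) (mem_Ioi.2 (by positivity)) ?_
  rw [log_div (by positivity) h₃.ne', log_mul h₁.ne' h₂.ne',
    log_stirlingApprox (mul_pos hc hx), log_stirlingApprox (mul_pos hc hy),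
    log_stirlingApprox (mul_pos hc hxy), log_mul hc.ne' hx.ne', log_mul hc.ne' hy.ne',
    log_mul hc.ne' hxy.ne', log_mul (by positivity) (by positivity), log_sqrt (by positivity),
    log_rpow (by positivity), log_div (by positivity) hxy.ne', log_mul (by positivity) hy.ne',
    log_mul hc.ne' hx.ne', log_div (by positivity) hxy'.ne', log_mul hx'.ne' hy'.ne',
    log_rpow hx, log_rpow hy, log_rpow hxy]
  ring

lemma choose_le_stirlingApprox {L K : ℕ} (hL : L ≠ 0) (hK : K ≠ 0) :
    ((L + K).choose L : ℝ) ≤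
      exp 1 * stirlingApprox (L + K) / (stirlingApprox L * stirlingApprox K) := by
  have hL' : (0 : ℝ) < L := Nat.cast_pos.2 (Nat.pos_of_ne_zero hL)
  have hK' : (0 : ℝ) < K := Nat.cast_pos.2 (Nat.pos_of_ne_zero hK)
  have hSL := stirlingApprox_pos hL'
  have hSK := stirlingApprox_pos hK'
  have hSLK := stirlingApprox_pos (add_pos hL' hK')
  have h := factorial_le_exp_one_mul_stirlingApprox (n := L + K) (by omega)
  push_cast at h
  rw [Nat.cast_choose ℝ (Nat.le_add_right L K), Nat.add_sub_cancel_left]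
  refine div_le_div₀ (by positivity) h (mul_pos hSL hSK) ?_
  exact mul_le_mul (stirlingApprox_natCast_le_factorial L) (stirlingApprox_natCast_le_factorial K)
    hSK.le (by positivity)

theorem choose_add_le_exp_one_div {L K : ℕ} (hL : L ≠ 0) (hK : K ≠ 0) :
    ((L + K).choose L : ℝ) ≤
      exp 1 / (√(L * K / (L + K)) * ((L : ℝ) ^ (L : ℝ) * K ^ (K : ℝ) / (L + K) ^ ((L : ℝ) + K))) := by
  have hx : (0 : ℝ) < L := Nat.cast_pos.2 (Nat.pos_of_ne_zero hL)
  have hy : (0 : ℝ) < K := Nat.cast_pos.2 (Nat.pos_of_ne_zero hK)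
  have h := stirlingApprox_mul_div_stirlingApprox one_pos hx hy
  simp only [one_mul, rpow_one] at h
  refine (choose_le_stirlingApprox hL hK).trans_eq ?_
  have := stirlingApprox_pos hx
  have := stirlingApprox_pos hy
  have := stirlingApprox_pos (add_pos hx hy)
  rw [← h]
  field_simp

theorem Bfun_mul_add_one_le {b x y : ℝ} (hb : 0 < b) (hx : 1 ≤ x) (hy : 1 ≤ y) :
    Bfun (b * x + 1) (b * y + 1) ≤ exp (5 + 3 / (2 * b)) / (b * (x + y)) *
      (√(b * x * y / (x + y)) * (x ^ x * y ^ y / (x + y) ^ (x + y)) ^ b) := by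
  have hx₀ : 0 < x := by linarith
  have hy₀ : 0 < y := by linarith
  have h := Bfun_add_one_le_stirlingApprox (mul_pos hb hx₀) (mul_pos hb hy₀)
  rw [← mul_add, stirlingApprox_mul_div_stirlingApprox hb hx₀ hy₀] at h
  refine h.trans ?_
  have h₁ : 1 / (2 * (b * x)) ≤ 1 / (2 * b) := by
    gcongr; exact le_mul_of_one_le_right hb.le hx
  have h₂ : 1 / (2 * (b * y)) ≤ 1 / (2 * b) := by
    gcongr; exact le_mul_of_one_le_right hb.le hy
  have h₃ : 1 / (b * (x + y)) ≤ 1 / (2 * b) :=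
    one_div_le_one_div_of_le (by positivity) (by nlinarith)
  gcongr exp ?_ / _ * _
  linarith [show 3 / (2 * b) = 3 * (1 / (2 * b)) by ring]

theorem choose_mul_Bfun_le {b : ℝ} (hb : 0 < b) {L K : ℕ} (hL : L ≠ 0) (hK : K ≠ 0) :
    ((L + K).choose L : ℝ) * Bfun (b * L + 1) (b * K + 1) ≤
      exp (6 + 3 / (2 * b)) / √b / (L + K : ℕ) *
        ((L : ℝ) ^ L * (K : ℝ) ^ K / ((L + K : ℕ) : ℝ) ^ (L + K)) ^ (b - 1) := by
  have hx : (1 : ℝ) ≤ L := Nat.one_le_cast.2 (Nat.pos_of_ne_zero hL)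
  have hy : (1 : ℝ) ≤ K := Nat.one_le_cast.2 (Nat.pos_of_ne_zero hK)
  rw [← rpow_natCast, ← rpow_natCast (K : ℝ), ← rpow_natCast, Nat.cast_add]
  set Q := (L : ℝ) ^ (L : ℝ) * (K : ℝ) ^ (K : ℝ) / ((L : ℝ) + K) ^ ((L : ℝ) + K)
  have hQ : 0 < Q := by positivity
  have hBfun : 0 ≤ Bfun (b * L + 1) (b * K + 1) := by
    rw [Bfun_eq_Gamma_mul_Gamma_div (by positivity) (by positivity)]
    positivity
  calc ((L + K).choose L : ℝ) * Bfun (b * L + 1) (b * K + 1)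
      ≤ exp 1 / (√(L * K / (L + K)) * Q) *
          (exp (5 + 3 / (2 * b)) / (b * (L + K)) * (√(b * L * K / (L + K)) * Q ^ b)) :=
        mul_le_mul (choose_add_le_exp_one_div hL hK) (Bfun_mul_add_one_le hb hx hy) hBfun
          (by positivity)
    _ = exp (6 + 3 / (2 * b)) / √b / (L + K) * Q ^ (b - 1) := by
        rw [show b * L * K / (L + K) = b * (L * K / (L + K)) by ring, sqrt_mul hb.le,
          rpow_sub_one hQ.ne', show (6 : ℝ) + 3 / (2 * b) = 1 + (5 + 3 / (2 * b)) by ring,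
          exp_add 1]
        field_simp
        rw [sq_sqrt hb.le]

lemma β_pos : 0 < β := by
  have : 3 < √17 := by rw [lt_sqrt] <;> norm_num
  unfold β
  linarith

/-- There is a constant `A₂ > 0` such that for all `m ≥ 2` and `1 ≤ ℓ ≤ m - 1`,
`C(m,ℓ) B(βℓ+1, β(m-ℓ)+1) ≤ (A₂/m) (ℓ^ℓ (m-ℓ)^{m-ℓ} / m^m)^{β-1}`. -/
theorem binomial_beta_bound :
    ∃ A₂ : ℝ, 0 < A₂ ∧ ∀ m : ℕ, 2 ≤ m → ∀ ℓ : ℕ, 1 ≤ ℓ → ℓ ≤ m - 1 →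
      (m.choose ℓ : ℝ) * Bfun (β * ℓ + 1) (β * ((m - ℓ : ℕ) : ℝ) + 1)
        ≤ (A₂ / m) *
          ((ℓ : ℝ) ^ ℓ * ((m - ℓ : ℕ) : ℝ) ^ (m - ℓ) / (m : ℝ) ^ m) ^ (β - 1) := by
  refine ⟨exp (6 + 3 / (2 * β)) / √β, div_pos (exp_pos _) (sqrt_pos.2 β_pos),
    fun m _ ℓ hℓ hℓm => ?_⟩
  obtain ⟨k, rfl⟩ : ∃ k, m = ℓ + k := ⟨m - ℓ, by omega⟩
  rw [Nat.add_sub_cancel_left]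
  exact choose_mul_Bfun_le β_pos (by omega) (by omega)
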